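/- Let G be a bipartite finite simple graph on n vertices with at least one edge and maximum vertex degree Δ. Then EE(G) ≥ 2cosh(√Δ) + (n − 2), with equality if and only if G is the disjoint union of a star K_{1,Δ} and n − Δ − 1 isolated vertices (in particular, if G is connected, if and only if G is the star S_n = K_{1,n−1}). -/

import Mathlib

/-!
A 2-colouring `C` gives a diagonal `D = diag(±1)` with `D A D = -A`, so the adjacency spectrum of a
bipartite graph is symmetric: its largest eigenvalue `λ` comes with `-λ`, and `|λᵢ| ≤ λ` for all `i`.
As `(A²)ᵥᵥ = deg v`, this gives `Δ ≤ λ²`. Writing `EE = 2 cosh λ + Σ' e^{λₖ}` over the remaining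
`n - 2` eigenvalues, `e^x ≥ 1 + x` and `Σ λₖ = tr A = 0` give the bound. Equality holds iff
`λ = √Δ` and all other eigenvalues vanish, which by `Σ λₖ² = tr A² = 2|E|` means `|E| = Δ`, i.e.
every edge contains a vertex of maximum degree.
-/

open Finset Real

namespace EstradaIndexPaper

/-- The adjacency matrix of a simple graph over `ℝ` is Hermitian. -/
theorem adjMatrix_isHermitian {n : ℕ} (G : SimpleGraph (Fin n)) [DecidableRel G.Adj] :
    (G.adjMatrix ℝ).IsHermitian := by
  unfold Matrix.IsHermitian
  rw [Matrix.conjTranspose_eq_transpose_of_trivial]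
  exact G.isSymm_adjMatrix

/-- The eigenvalues of the adjacency matrix of `G`. -/
noncomputable def eig {n : ℕ} (G : SimpleGraph (Fin n)) [DecidableRel G.Adj] : Fin n → ℝ :=
  (adjMatrix_isHermitian G).eigenvalues

/-- The Estrada index of `G`: the sum of `e^{λ_i}` over the adjacency eigenvalues. -/
noncomputable def EE {n : ℕ} (G : SimpleGraph (Fin n)) [DecidableRel G.Adj] : ℝ :=
  ∑ i, Real.exp (eig G i)

/-- The largest adjacency eigenvalue `λ₁` of `G`. -/
noncomputable def lam1 {n : ℕ} (G : SimpleGraph (Fin n)) [DecidableRel G.Adj] : ℝ :=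
  ⨆ i, eig G i

/-- The Randić index `R(G) = Σ_{ij ∈ E(G)} (d(i)d(j))^{-1/2}`. -/
noncomputable def randic {n : ℕ} (G : SimpleGraph (Fin n)) [DecidableRel G.Adj] : ℝ :=
  ∑ e ∈ G.edgeFinset,
    Sym2.lift ⟨fun i j => (Real.sqrt ((G.degree i : ℝ) * (G.degree j : ℝ)))⁻¹,
      fun i j => by simp [mul_comm]⟩ e

/-- The general Randić index `R_{1/2}(G) = Σ_{ij ∈ E(G)} (d(i)d(j))^{1/2}`. -/
noncomputable def randicHalf {n : ℕ} (G : SimpleGraph (Fin n)) [DecidableRel G.Adj] : ℝ :=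
  ∑ e ∈ G.edgeFinset,
    Sym2.lift ⟨fun i j => Real.sqrt ((G.degree i : ℝ) * (G.degree j : ℝ)),
      fun i j => by simp [mul_comm]⟩ e

end EstradaIndexPaper

open Matrix

namespace Matrix.IsHermitian

variable {m : Type*} [Fintype m] [DecidableEq m] {A : Matrix m m ℝ}

theorem trace_cfc (hA : A.IsHermitian) (f : ℝ → ℝ) :
    (cfc f A).trace = ∑ i, f (hA.eigenvalues i) := by
  rw [hA.cfc_eq, IsHermitian.cfc, Unitary.conjStarAlgAut_apply, trace_mul_cycle,
    Unitary.coe_star_mul_self, one_mul, trace_diagonal]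
  rfl

theorem trace_mul_self (hA : A.IsHermitian) :
    (A * A).trace = ∑ i, hA.eigenvalues i ^ 2 := by
  rw [← hA.trace_cfc (· ^ 2), cfc_pow_id A 2 hA.isSelfAdjoint, sq]

open scoped MatrixOrder in
theorem mul_self_apply_self_le (hA : A.IsHermitian) {c : ℝ}
    (hc : ∀ i, |hA.eigenvalues i| ≤ c) (v : m) : (A * A) v v ≤ c ^ 2 := by
  have hnonneg : 0 ≤ cfc (fun x => c ^ 2 - x ^ 2) A := by
    refine cfc_nonneg fun x hx => ?_
    obtain ⟨i, rfl⟩ := hA.spectrum_real_eq_range_eigenvalues ▸ hx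
    have := hc i
    nlinarith [abs_nonneg (hA.eigenvalues i), sq_abs (hA.eigenvalues i)]
  rw [cfc_sub _ _ A, cfc_const _ A, cfc_pow_id A 2] at hnonneg
  simpa [sq, Algebra.algebraMap_eq_smul_one] using
    (nonneg_iff_posSemidef.mp hnonneg).diag_nonneg (i := v)

theorem exists_eigenvalues_eq_neg (hA : A.IsHermitian) (hneg : spectrum ℝ (-A) = spectrum ℝ A)
    (i : m) : ∃ j, hA.eigenvalues j = -hA.eigenvalues i := by
  have : -hA.eigenvalues i ∈ spectrum ℝ A := by
    rw [← hneg, ← spectrum.neg_eq, Set.neg_mem_neg]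
    exact hA.eigenvalues_mem_spectrum_real i
  rwa [hA.spectrum_real_eq_range_eigenvalues] at this

end Matrix.IsHermitian

section ExpSum

variable {ι : Type*} {μ : ι → ℝ}

theorem Finset.sum_exp_sub_card_eq {s : Finset ι} (hs : ∑ k ∈ s, μ k = 0) :
    ∑ k ∈ s, exp (μ k) - #s = ∑ k ∈ s, (exp (μ k) - (μ k + 1)) := by
  simp only [sum_sub_distrib, sum_add_distrib, hs, sum_const, nsmul_one]
  ring

theorem Finset.card_le_sum_exp {s : Finset ι} (hs : ∑ k ∈ s, μ k = 0) :
    (#s : ℝ) ≤ ∑ k ∈ s, exp (μ k) := by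
  have := sum_exp_sub_card_eq hs
  have : 0 ≤ ∑ k ∈ s, (exp (μ k) - (μ k + 1)) :=
    sum_nonneg fun k _ => sub_nonneg.2 (add_one_le_exp _)
  linarith

theorem Finset.sum_exp_eq_card_iff {s : Finset ι} (hs : ∑ k ∈ s, μ k = 0) :
    ∑ k ∈ s, exp (μ k) = #s ↔ ∀ k ∈ s, μ k = 0 := by
  rw [← sub_eq_zero, sum_exp_sub_card_eq hs,
    sum_eq_zero_iff_of_nonneg fun k _ => sub_nonneg.2 (add_one_le_exp _)]
  refine forall₂_congr fun k _ => ⟨fun h => ?_, fun h => by simp [h]⟩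
  by_contra hk
  linarith [add_one_lt_exp hk]

variable {R : Finset ι} {s t : ℝ}

theorem two_mul_cosh_add_sum_exp_eq_iff (hR : ∑ k ∈ R, μ k = 0) (ht : 0 ≤ t) (hts : t ≤ s) :
    2 * cosh s + ∑ k ∈ R, exp (μ k) = 2 * cosh t + #R ↔ s = t ∧ ∀ k ∈ R, μ k = 0 := by
  have hcosh : cosh t ≤ cosh s := cosh_strictMonoOn.monotoneOn ht (ht.trans hts) hts
  have hexp := R.card_le_sum_exp hR
  rw [← R.sum_exp_eq_card_iff hR]
  constructor
  · intro h
    exact ⟨cosh_strictMonoOn.injOn (ht.trans hts) ht (by linarith), by linarith⟩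
  · rintro ⟨rfl, h⟩
    linarith

theorem two_mul_sq_add_sum_sq_eq_iff (ht : 0 ≤ t) (hts : t ≤ s) :
    2 * s ^ 2 + ∑ k ∈ R, μ k ^ 2 = 2 * t ^ 2 ↔ s = t ∧ ∀ k ∈ R, μ k = 0 := by
  have hR : 0 ≤ ∑ k ∈ R, μ k ^ 2 := sum_nonneg fun k _ => sq_nonneg _
  have hR0 : ∑ k ∈ R, μ k ^ 2 = 0 ↔ ∀ k ∈ R, μ k = 0 := by
    simp [sum_eq_zero_iff_of_nonneg fun k _ => sq_nonneg (μ k)]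
  constructor
  · intro h
    have hst : s = t := le_antisymm (by nlinarith) hts
    exact ⟨hst, hR0.1 (by subst hst; linarith)⟩
  · rintro ⟨rfl, h⟩
    rw [hR0.2 h]
    ring

variable [Fintype ι] [DecidableEq ι]

theorem two_mul_cosh_add_card_sub_two_le_sum_exp_and_eq_iff {i j : ι} (hij : i ≠ j) (ht : 0 ≤ t)
    (hts : t ≤ s) (hi : μ i = s) (hj : μ j = -s) (hsum : ∑ k, μ k = 0) :
    2 * cosh t + (Fintype.card ι - 2) ≤ ∑ k, exp (μ k) ∧
      (∑ k, exp (μ k) = 2 * cosh t + (Fintype.card ι - 2) ↔ ∑ k, μ k ^ 2 = 2 * t ^ 2) := by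
  set R : Finset ι := {i, j}ᶜ
  have hsplit (f : ι → ℝ) : ∑ k, f k = f i + f j + ∑ k ∈ R, f k := by
    rw [← sum_add_sum_compl {i, j}, sum_pair hij]
  have hcard : (#R : ℝ) = Fintype.card ι - 2 := by
    have : 2 ≤ Fintype.card ι := Fintype.one_lt_card_iff.2 ⟨i, j, hij⟩
    rw [card_compl, card_pair hij, Nat.cast_sub this, Nat.cast_ofNat]
  have hRsum : ∑ k ∈ R, μ k = 0 := by linarith [hsplit μ]
  have hexp : ∑ k, exp (μ k) = 2 * cosh s + ∑ k ∈ R, exp (μ k) := by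
    rw [hsplit, hi, hj, cosh_eq]; ring
  have hsq : ∑ k, μ k ^ 2 = 2 * s ^ 2 + ∑ k ∈ R, μ k ^ 2 := by
    rw [hsplit, hi, hj]; ring
  rw [hexp, hsq, ← hcard, two_mul_cosh_add_sum_exp_eq_iff hRsum ht hts,
    two_mul_sq_add_sum_sq_eq_iff ht hts]
  refine ⟨?_, Iff.rfl⟩
  linarith [cosh_strictMonoOn.monotoneOn ht (ht.trans hts) hts, R.card_le_sum_exp hRsum]

end ExpSum

namespace SimpleGraph

variable {V W : Type*}

theorem diagonal_mul_adjMatrix_mul_diagonal [Fintype V] [DecidableEq V] (G : SimpleGraph V)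
    [DecidableRel G.Adj] {s : V → ℝ} (hs : ∀ ⦃a b⦄, G.Adj a b → s a * s b = -1) :
    diagonal s * G.adjMatrix ℝ * diagonal s = -G.adjMatrix ℝ := by
  ext a b
  simp only [diagonal_mul, mul_diagonal, adjMatrix_apply]
  by_cases hab : G.Adj a b
  · simp [hab, hs hab]
  · simp [hab]

theorem spectrum_neg_adjMatrix [Fintype V] [DecidableEq V] {G : SimpleGraph V}
    [DecidableRel G.Adj] (hbip : G.Colorable 2) :
    spectrum ℝ (-G.adjMatrix ℝ) = spectrum ℝ (G.adjMatrix ℝ) := by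
  obtain ⟨C⟩ := hbip
  set s : V → ℝ := fun v => if C v = 0 then 1 else -1
  have hs : ∀ ⦃a b⦄, G.Adj a b → s a * s b = -1 := fun a b hab => by
    have := C.valid hab
    rcases Fin.exists_fin_two.1 ⟨C a, rfl⟩ with ha | ha <;>
      rcases Fin.exists_fin_two.1 ⟨C b, rfl⟩ with hb | hb <;> simp_all [s]
  have hD : diagonal s * diagonal s = 1 := by
    rw [diagonal_mul_diagonal, ← diagonal_one]
    congr 1; ext v; simp only [s]; split_ifs <;> norm_num
  rw [← G.diagonal_mul_adjMatrix_mul_diagonal hs]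
  exact spectrum.units_conjugate (u := ⟨diagonal s, diagonal s, hD, hD⟩)

def IsStarCenter (G : SimpleGraph V) (v : V) : Prop :=
  ∀ ⦃a b⦄, G.Adj a b → a = v ∨ b = v

theorem isStarCenter_iff_card_edgeFinset_eq_degree [Fintype V] [DecidableEq V]
    {G : SimpleGraph V} [DecidableRel G.Adj] {v : V} :
    G.IsStarCenter v ↔ #G.edgeFinset = G.degree v := by
  rw [← card_incidenceFinset_eq_degree, incidenceFinset_eq_filter, eq_comm, card_filter_eq_iff]
  refine ⟨fun h e he => ?_, fun h a b hab => ?_⟩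
  · induction e with
    | _ a b => rcases h (mem_edgeFinset.1 he) with rfl | rfl <;> simp
  · simpa [eq_comm] using h s(a, b) (mem_edgeFinset.2 hab)

open Classical in
noncomputable def starRole (G : SimpleGraph V) (v a : V) : Fin 3 :=
  if a = v then 0 else if G.Adj v a then 1 else 2

section starRole

variable {G : SimpleGraph V} {v a : V}

theorem starRole_eq_zero : G.starRole v a = 0 ↔ a = v := by
  unfold starRole; split_ifs <;> simp_all

theorem starRole_eq_one : G.starRole v a = 1 ↔ G.Adj v a := by
  unfold starRole; split_ifs <;> simp_all

theorem starRole_eq_two : G.starRole v a = 2 ↔ a ≠ v ∧ ¬G.Adj v a := by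
  unfold starRole; split_ifs <;> simp_all

theorem IsStarCenter.adj_iff (hv : G.IsStarCenter v) (a b : V) :
    G.Adj a b ↔ (G.starRole v a = 0 ∧ G.starRole v b = 1) ∨
      (G.starRole v a = 1 ∧ G.starRole v b = 0) := by
  simp only [starRole_eq_zero, starRole_eq_one]
  constructor
  · intro hab
    rcases hv hab with rfl | rfl
    exacts [Or.inl ⟨rfl, hab⟩, Or.inr ⟨hab.symm, rfl⟩]
  · rintro (⟨rfl, hab⟩ | ⟨hab, rfl⟩)
    exacts [hab, hab.symm]

variable [Fintype V]

theorem card_starRole_eq_zero : Fintype.card {a // G.starRole v a = 0} = 1 := by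
  classical
  rw [Fintype.card_subtype, ← card_singleton v]
  congr 1; ext a; simp [starRole_eq_zero]

variable [DecidableRel G.Adj]

theorem card_starRole_eq_one : Fintype.card {a // G.starRole v a = 1} = G.degree v := by
  classical
  rw [Fintype.card_subtype, ← card_neighborFinset_eq_degree]
  congr 1; ext a; simp [starRole_eq_one]

theorem card_starRole_eq_two :
    Fintype.card {a // G.starRole v a = 2} = Fintype.card V - (G.degree v + 1) := by
  classical
  rw [Fintype.card_subtype, ← card_neighborFinset_eq_degree,
    ← card_insert_of_notMem (G.notMem_neighborFinset_self v), ← card_compl]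
  congr 1; ext a; simp [starRole_eq_two]

end starRole

theorem nonempty_iso_of_isStarCenter [Fintype V] [Fintype W] {G : SimpleGraph V}
    {H : SimpleGraph W} [DecidableRel G.Adj] [DecidableRel H.Adj] {v : V} {w : W}
    (hv : G.IsStarCenter v) (hw : H.IsStarCenter w) (hdeg : G.degree v = H.degree w)
    (hcard : Fintype.card V = Fintype.card W) : Nonempty (G ≃g H) := by
  classical
  have hcard_fiber : ∀ k, Fintype.card {a // G.starRole v a = k} =
      Fintype.card {b // H.starRole w b = k} := by
    intro k
    fin_cases k
    · exact card_starRole_eq_zero.trans card_starRole_eq_zero.symm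
    · exact card_starRole_eq_one.trans (hdeg.trans card_starRole_eq_one.symm)
    · exact card_starRole_eq_two.trans (hdeg ▸ hcard ▸ card_starRole_eq_two.symm)
  -- any bijection preserving `starRole` is an isomorphism, by `IsStarCenter.adj_iff`
  have hfiber k := Fintype.equivOfCardEq (hcard_fiber k)
  refine ⟨⟨Equiv.ofFiberEquiv hfiber, fun {a b} => ?_⟩⟩
  simp only [hv.adj_iff, hw.adj_iff, Equiv.ofFiberEquiv_map hfiber]

theorem isStarCenter_completeBipartiteGraph_sum_bot (d k : ℕ) :
    (completeBipartiteGraph (Fin 1) (Fin d) ⊕g (⊥ : SimpleGraph (Fin k))).IsStarCenter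
      (.inl (.inl 0)) := by
  rintro ((a | a) | a) ((b | b) | b) hab <;> simp_all [Fin.fin_one_eq_zero]

theorem neighborSet_completeBipartiteGraph_sum_bot (d k : ℕ) :
    (completeBipartiteGraph (Fin 1) (Fin d) ⊕g (⊥ : SimpleGraph (Fin k))).neighborSet
      (.inl (.inl 0)) = Set.range (Sum.inl ∘ Sum.inr) := by
  ext ((a | a) | a) <;> simp

theorem degree_completeBipartiteGraph_sum_bot (d k : ℕ)
    [Fintype ((completeBipartiteGraph (Fin 1) (Fin d) ⊕g (⊥ : SimpleGraph (Fin k))).neighborSet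
      (.inl (.inl 0)))] :
    (completeBipartiteGraph (Fin 1) (Fin d) ⊕g (⊥ : SimpleGraph (Fin k))).degree
      (.inl (.inl 0)) = d := by
  rw [← card_neighborSet_eq_degree, Fintype.card_congr
    (Equiv.setCongr (neighborSet_completeBipartiteGraph_sum_bot d k)),
    Set.card_range_of_injective (Sum.inl_injective.comp Sum.inr_injective), Fintype.card_fin]

theorem card_edgeFinset_eq_maxDegree_iff [Fintype V] [Nonempty V]
    {G : SimpleGraph V} [DecidableRel G.Adj] :
    #G.edgeFinset = G.maxDegree ↔
      Nonempty (G ≃g (completeBipartiteGraph (Fin 1) (Fin G.maxDegree) ⊕g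
        (⊥ : SimpleGraph (Fin (Fintype.card V - G.maxDegree - 1))))) := by
  classical
  have hcenter := isStarCenter_completeBipartiteGraph_sum_bot G.maxDegree
    (Fintype.card V - G.maxDegree - 1)
  constructor
  · intro h
    obtain ⟨v, hv⟩ := G.exists_maximal_degree_vertex
    refine nonempty_iso_of_isStarCenter (isStarCenter_iff_card_edgeFinset_eq_degree.2 (hv ▸ h))
      hcenter (by rw [← hv, degree_completeBipartiteGraph_sum_bot]) ?_
    have := G.maxDegree_lt_card_verts
    simp only [Fintype.card_sum, Fintype.card_fin]
    omega
  · rintro ⟨φ⟩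
    rw [φ.card_edgeFinset_eq, isStarCenter_iff_card_edgeFinset_eq_degree.1 hcenter,
      degree_completeBipartiteGraph_sum_bot]

end SimpleGraph

namespace EstradaIndexPaper

variable {n : ℕ} (G : SimpleGraph (Fin n)) [DecidableRel G.Adj]

theorem sum_eig_eq_zero : ∑ i, eig G i = 0 := by
  simpa [eig, SimpleGraph.trace_adjMatrix] using
    ((adjMatrix_isHermitian G).trace_eq_sum_eigenvalues).symm

theorem sum_eig_sq : ∑ i, eig G i ^ 2 = 2 * #G.edgeFinset := by
  rw [eig, ← (adjMatrix_isHermitian G).trace_mul_self, trace]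
  simp only [diag_apply, SimpleGraph.adjMatrix_mul_self_apply_self]
  exact_mod_cast G.sum_degrees_eq_twice_card_edges

variable {G}

theorem degree_le_sq_of_abs_eig_le {c : ℝ} (hc : ∀ i, |eig G i| ≤ c) (v : Fin n) :
    (G.degree v : ℝ) ≤ c ^ 2 := by
  rw [← G.adjMatrix_mul_self_apply_self]
  exact (adjMatrix_isHermitian G).mul_self_apply_self_le hc v

theorem exists_eig_eq_neg (hbip : G.Colorable 2) (i : Fin n) : ∃ j, eig G j = -eig G i :=
  (adjMatrix_isHermitian G).exists_eigenvalues_eq_neg (SimpleGraph.spectrum_neg_adjMatrix hbip) i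

theorem exists_eig_pair (hbip : G.Colorable 2) (hG : G.edgeFinset.Nonempty) :
    ∃ i j, i ≠ j ∧ √(G.maxDegree : ℝ) ≤ eig G i ∧ eig G j = -eig G i := by
  obtain ⟨a, b, hab⟩ := SimpleGraph.ne_bot_iff_exists_adj.1 (SimpleGraph.edgeFinset_nonempty.1 hG)
  have : Nonempty (Fin n) := ⟨a⟩
  have hΔ : (0 : ℝ) < G.maxDegree := by
    exact_mod_cast ((G.degree_pos_iff_exists_adj a).2 ⟨b, hab⟩).trans_le (G.degree_le_maxDegree a)
  obtain ⟨i, hi⟩ := Finite.exists_max (eig G)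
  obtain ⟨j, hj⟩ := exists_eig_eq_neg hbip i
  have habs (k : Fin n) : |eig G k| ≤ eig G i := by
    obtain ⟨k', hk'⟩ := exists_eig_eq_neg hbip k
    exact abs_le.2 ⟨by linarith [hi k'], hi k⟩
  obtain ⟨v, hv⟩ := G.exists_maximal_degree_vertex
  have hsq : (G.maxDegree : ℝ) ≤ eig G i ^ 2 := hv ▸ degree_le_sq_of_abs_eig_le habs v
  refine ⟨i, j, fun hij => ?_, Real.sqrt_le_iff.2 ⟨(abs_nonneg _).trans (habs i), hsq⟩, hj⟩
  subst hij
  nlinarith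

theorem le_EE_and_EE_eq_iff_card_edgeFinset_eq (hbip : G.Colorable 2) (hG : G.edgeFinset.Nonempty) :
    2 * cosh √(G.maxDegree : ℝ) + ((n : ℝ) - 2) ≤ EE G ∧
      (EE G = 2 * cosh √(G.maxDegree : ℝ) + ((n : ℝ) - 2) ↔ #G.edgeFinset = G.maxDegree) := by
  obtain ⟨i, j, hij, hi, hj⟩ := exists_eig_pair hbip hG
  obtain ⟨hle, heq⟩ := two_mul_cosh_add_card_sub_two_le_sum_exp_and_eq_iff hij
    (Real.sqrt_nonneg _) hi rfl hj (sum_eig_eq_zero G)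
  rw [Fintype.card_fin] at hle heq
  refine ⟨hle, heq.trans ?_⟩
  rw [sum_eig_sq, Real.sq_sqrt (Nat.cast_nonneg _)]
  norm_cast
  omega

theorem stmt10 {n : ℕ} (G : SimpleGraph (Fin n)) [DecidableRel G.Adj]
    (hbip : G.Colorable 2) (hG : G.edgeFinset.Nonempty) :
    EE G ≥ 2 * Real.cosh (Real.sqrt (G.maxDegree)) + ((n : ℝ) - 2) ∧
    (EE G = 2 * Real.cosh (Real.sqrt (G.maxDegree)) + ((n : ℝ) - 2) ↔
      Nonempty (G ≃g (completeBipartiteGraph (Fin 1) (Fin G.maxDegree) ⊕g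
        (⊥ : SimpleGraph (Fin (n - G.maxDegree - 1)))))) := by
  obtain ⟨a, -, -⟩ := SimpleGraph.ne_bot_iff_exists_adj.1 (SimpleGraph.edgeFinset_nonempty.1 hG)
  have : Nonempty (Fin n) := ⟨a⟩
  obtain ⟨hle, heq⟩ := le_EE_and_EE_eq_iff_card_edgeFinset_eq hbip hG
  refine ⟨hle, heq.trans ?_⟩
  have h := SimpleGraph.card_edgeFinset_eq_maxDegree_iff (G := G)
  rwa [Fintype.card_fin] at h

end EstradaIndexPaper
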